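/- arXiv:2504.12625 — 3 statements merged into one kernel-verified Lean document; each statement's English description precedes it below -/
import Mathlib

section
/- For positive self-adjoint operators A and B on a Hilbert space and any s in [0,1], the operator norm satisfies ‖A^s B^s‖ ≤ ‖AB‖^s (the Cordes inequality). -/
/-!
The function `f s = ‖a ^ s * b ^ s‖` is midpoint log-convex: with `u = (s + t) / 2`, the C⋆-identity
gives `f u ^ 2 = ‖b^u a^{2u} b^u‖`, the spectral radius of this self-adjoint element, and cycling
factors (which preserves the spectral radius) turns it into that of `(a^t b^t) (b^s a^s)`, so
`f u ^ 2 ≤ f s * f t`. Since `f 0 ≤ 1` and `f 1 = ‖a b‖`, induction gives `f s ≤ ‖a b‖ ^ s` on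
dyadic `s`, and the bound `f (s + δ) ≤ (‖a‖ ‖b‖) ^ δ f s` extends it to all of `[0, 1]`.
-/

open scoped ENNReal
open Filter Topology

theorem spectralRadius_mul_comm {𝕜 A : Type*} [NormedField 𝕜] [Ring A] [Algebra 𝕜 A] (a b : A) :
    spectralRadius 𝕜 (a * b) = spectralRadius 𝕜 (b * a) := by
  suffices h : ∀ a b : A, spectralRadius 𝕜 (a * b) ≤ spectralRadius 𝕜 (b * a) from
    (h a b).antisymm (h b a)
  intro a b
  refine iSup₂_le fun k hk => ?_
  rcases eq_or_ne k 0 with rfl | hk0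
  · simp
  · have hk' : k ∈ spectrum 𝕜 (b * a) \ {0} :=
      spectrum.nonzero_mul_comm (𝕜 := 𝕜) a b ▸ ⟨hk, hk0⟩
    exact le_iSup₂ (f := fun k (_ : k ∈ spectrum 𝕜 (b * a)) => (‖k‖₊ : ℝ≥0∞)) k hk'.1

namespace CFC

variable {A : Type*} [CStarAlgebra A] [PartialOrder A] [StarOrderedRing A]

theorem rpow_add_of_nonneg (a : A) {x y : ℝ} (hx : 0 ≤ x) (hy : 0 ≤ y) :
    a ^ (x + y) = a ^ x * a ^ y := by
  simp only [rpow_def]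
  rw [← cfc_mul _ _ a]
  exact cfc_congr fun z _ => NNReal.rpow_add_of_nonneg z hx hy

theorem norm_rpow_le [Nontrivial A] {a : A} (ha : 0 ≤ a) {x : ℝ} (hx : 0 ≤ x) :
    ‖a ^ x‖ ≤ ‖a‖ ^ x := by
  rcases hx.eq_or_lt with rfl | hx
  · simp [rpow_zero a ha]
  · exact (norm_rpow a hx ha).le

theorem norm_rpow_mul_rpow_midpoint_sq_le [Nontrivial A] (a b : A) {s t : ℝ}
    (hs : 0 ≤ s) (ht : 0 ≤ t) :
    ‖a ^ ((s + t) / 2) * b ^ ((s + t) / 2)‖ ^ 2 ≤ ‖a ^ s * b ^ s‖ * ‖a ^ t * b ^ t‖ := by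
  set u := (s + t) / 2
  have hu : 0 ≤ u := by positivity
  have ha2 : a ^ u * a ^ u = a ^ s * a ^ t := by
    rw [← rpow_add_of_nonneg a hu hu, ← rpow_add_of_nonneg a hs ht]
    congr 1; simp only [u]; ring
  have hb2 : b ^ u * b ^ u = b ^ t * b ^ s := by
    rw [← rpow_add_of_nonneg b hu hu, ← rpow_add_of_nonneg b ht hs]
    congr 1; simp only [u]; ring
  have star_rpow_mul_rpow (x : ℝ) : star (a ^ x * b ^ x) = b ^ x * a ^ x := by
    rw [star_mul, rpow_nonneg.isSelfAdjoint.star_eq, rpow_nonneg.isSelfAdjoint.star_eq]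
  have key : (‖a ^ u * b ^ u‖₊ ^ 2 : ℝ≥0∞) ≤ ‖a ^ t * b ^ t‖₊ * ‖a ^ s * b ^ s‖₊ :=
    calc (‖a ^ u * b ^ u‖₊ ^ 2 : ℝ≥0∞)
        = ‖star (a ^ u * b ^ u) * (a ^ u * b ^ u)‖₊ := by
          rw [CStarRing.nnnorm_star_mul_self, sq, ENNReal.coe_mul]
      _ = spectralRadius ℂ (star (a ^ u * b ^ u) * (a ^ u * b ^ u)) :=
          (IsSelfAdjoint.star_mul_self _).spectralRadius_eq_nnnorm.symm
      _ = spectralRadius ℂ (b ^ u * (a ^ u * a ^ u * b ^ u)) := by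
          rw [star_rpow_mul_rpow]; simp only [mul_assoc]
      _ = spectralRadius ℂ (a ^ u * a ^ u * (b ^ u * b ^ u)) := by
          rw [spectralRadius_mul_comm]; simp only [mul_assoc]
      _ = spectralRadius ℂ (a ^ t * b ^ t * (b ^ s * a ^ s)) := by
          rw [ha2, hb2, mul_assoc, spectralRadius_mul_comm]; simp only [mul_assoc]
      _ ≤ ‖a ^ t * b ^ t * (b ^ s * a ^ s)‖₊ := spectrum.spectralRadius_le_nnnorm _
      _ ≤ ‖a ^ t * b ^ t‖₊ * ‖b ^ s * a ^ s‖₊ := by exact_mod_cast nnnorm_mul_le _ _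
      _ = ‖a ^ t * b ^ t‖₊ * ‖a ^ s * b ^ s‖₊ := by rw [← star_rpow_mul_rpow, nnnorm_star]
  rw [mul_comm]
  exact_mod_cast key

theorem norm_rpow_add_mul_rpow_add_le [Nontrivial A] {a b : A} (ha : 0 ≤ a) (hb : 0 ≤ b)
    {s δ : ℝ} (hs : 0 ≤ s) (hδ : 0 ≤ δ) :
    ‖a ^ (s + δ) * b ^ (s + δ)‖ ≤ (‖a‖ * ‖b‖) ^ δ * ‖a ^ s * b ^ s‖ :=
  calc ‖a ^ (s + δ) * b ^ (s + δ)‖ = ‖a ^ δ * (a ^ s * b ^ s) * b ^ δ‖ := by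
        rw [rpow_add_of_nonneg b hs hδ, add_comm, rpow_add_of_nonneg a hδ hs]
        simp only [mul_assoc]
    _ ≤ ‖a ^ δ‖ * ‖a ^ s * b ^ s‖ * ‖b ^ δ‖ := norm_mul₃_le
    _ ≤ ‖a‖ ^ δ * ‖a ^ s * b ^ s‖ * ‖b‖ ^ δ := by
        gcongr
        exacts [norm_rpow_le ha hδ, norm_rpow_le hb hδ]
    _ = (‖a‖ * ‖b‖) ^ δ * ‖a ^ s * b ^ s‖ := by
        rw [Real.mul_rpow (norm_nonneg _) (norm_nonneg _)]; ring

end CFC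

section MidpointLogConvex

variable {f : ℝ → ℝ} {c : ℝ}

theorem apply_dyadic_le_rpow_of_midpoint_sq_le (hf : ∀ s, 0 ≤ f s) (hc : 0 ≤ c) (h0 : f 0 ≤ 1)
    (h1 : f 1 ≤ c) (hmid : ∀ s t, 0 ≤ s → 0 ≤ t → f ((s + t) / 2) ^ 2 ≤ f s * f t) (n : ℕ) :
    ∀ k : ℕ, k ≤ 2 ^ n → f (k / 2 ^ n) ≤ c ^ ((k : ℝ) / 2 ^ n) := by
  induction n with
  | zero =>
    intro k hk
    interval_cases k <;> simpa
  | succ n ih =>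
    intro k hk
    set x : ℝ := (k / 2 : ℕ) / 2 ^ n
    set y : ℝ := (k - k / 2 : ℕ) / 2 ^ n
    have hxy : (k : ℝ) / 2 ^ (n + 1) = (x + y) / 2 := by
      rw [← add_div, ← Nat.cast_add, Nat.add_sub_cancel' (Nat.div_le_self k 2)]
      ring
    have hx : f x ≤ c ^ x := ih _ (by rw [pow_succ] at hk; omega)
    have hy : f y ≤ c ^ y := ih _ (by rw [pow_succ] at hk; omega)
    rw [hxy]
    refine le_of_sq_le_sq ?_ (by positivity)
    calc f ((x + y) / 2) ^ 2 ≤ f x * f y := hmid _ _ (by positivity) (by positivity)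
      _ ≤ c ^ x * c ^ y := mul_le_mul hx hy (hf _) (by positivity)
      _ = (c ^ ((x + y) / 2)) ^ 2 := by
        rw [← Real.rpow_add_of_nonneg hc (by positivity) (by positivity),
          ← Real.rpow_mul_natCast hc]
        ring_nf

theorem le_rpow_of_midpoint_sq_le {M : ℝ} (hf : ∀ s, 0 ≤ f s) (hc : 0 ≤ c) (hM : 0 ≤ M)
    (h0 : f 0 ≤ 1) (h1 : f 1 ≤ c)
    (hmid : ∀ s t, 0 ≤ s → 0 ≤ t → f ((s + t) / 2) ^ 2 ≤ f s * f t)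
    (hshift : ∀ s δ, 0 ≤ s → 0 ≤ δ → f (s + δ) ≤ M ^ δ * f s) {s : ℝ} (hs0 : 0 ≤ s)
    (hs1 : s ≤ 1) : f s ≤ c ^ s := by
  rcases hs0.eq_or_lt with rfl | hs
  · simpa using h0
  set σ : ℕ → ℝ := fun n => (⌊s * 2 ^ n⌋₊ : ℝ) / 2 ^ n
  have hσ : Tendsto σ atTop (𝓝 s) :=
    (tendsto_nat_floor_mul_div_atTop hs0).comp (tendsto_pow_atTop_atTop_of_one_lt one_lt_two)
  have hσ_le (n : ℕ) : σ n ≤ s :=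
    div_le_of_le_mul₀ (by positivity) hs0 (Nat.floor_le (by positivity))
  -- `M + 1` rather than `M`: `0 ^ δ` does not tend to `1` as `δ → 0⁺`.
  have hbound (n : ℕ) : f s ≤ (M + 1) ^ (s - σ n) * c ^ σ n := by
    have hk : ⌊s * 2 ^ n⌋₊ ≤ 2 ^ n :=
      Nat.floor_le_of_le (by push_cast; nlinarith [(by positivity : (0 : ℝ) < 2 ^ n)])
    calc f s = f (σ n + (s - σ n)) := by ring_nf
      _ ≤ M ^ (s - σ n) * f (σ n) := hshift _ _ (by positivity) (sub_nonneg.2 (hσ_le n))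
      _ ≤ (M + 1) ^ (s - σ n) * c ^ σ n :=
        mul_le_mul (Real.rpow_le_rpow hM (by linarith) (sub_nonneg.2 (hσ_le n)))
          (apply_dyadic_le_rpow_of_midpoint_sq_le hf hc h0 h1 hmid n _ hk) (hf _) (by positivity)
  have hlim : Tendsto (fun n => (M + 1) ^ (s - σ n) * c ^ σ n) atTop (𝓝 (c ^ s)) := by
    have hM1 : Tendsto (fun n => (M + 1) ^ (s - σ n)) atTop (𝓝 ((M + 1) ^ (s - s))) :=
      (Real.continuousAt_const_rpow (by positivity)).tendsto.comp (tendsto_const_nhds.sub hσ)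
    simpa using hM1.mul ((Real.continuousAt_const_rpow' hs.ne').tendsto.comp hσ)
  exact ge_of_tendsto' hlim hbound

end MidpointLogConvex

/-- **Cordes inequality**: for positive (self-adjoint) bounded operators `A`, `B`
on a complex Hilbert space and `s ∈ [0,1]`, one has `‖A^s * B^s‖ ≤ ‖A * B‖ ^ s`,
where the real powers are taken via the continuous functional calculus. -/
theorem cordes_inequality {H : Type*} [NormedAddCommGroup H] [InnerProductSpace ℂ H]
    [CompleteSpace H] (A B : H →L[ℂ] H) (hA : 0 ≤ A) (hB : 0 ≤ B)
    {s : ℝ} (hs0 : 0 ≤ s) (hs1 : s ≤ 1) :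
    ‖CFC.rpow A s * CFC.rpow B s‖ ≤ ‖A * B‖ ^ s := by
  rcases subsingleton_or_nontrivial H with hH | hH
  · rw [Subsingleton.elim (CFC.rpow A s * CFC.rpow B s) 0, norm_zero]
    positivity
  refine le_rpow_of_midpoint_sq_le (f := fun s => ‖A ^ s * B ^ s‖) (fun _ => norm_nonneg _)
    (norm_nonneg _) (by positivity : 0 ≤ ‖A‖ * ‖B‖) ?_ ?_
    (fun s t hs ht => CFC.norm_rpow_mul_rpow_midpoint_sq_le A B hs ht)
    (fun s δ hs hδ => CFC.norm_rpow_add_mul_rpow_add_le hA hB hs hδ) hs0 hs1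
  · simp [CFC.rpow_zero A hA, CFC.rpow_zero B hB]
  · simp [CFC.rpow_one A hA, CFC.rpow_one B hB]
end

section
/- Let T and L be positive self-adjoint operators on a Hilbert space and let λ > 0. Then ‖(λI+T)^{-1}(λI+L)‖ ≤ (λ^{-1/2} ‖(λI+L)^{-1/2}(L−T)‖ + 1)^2. -/
open scoped NNReal

set_option maxHeartbeats 1000000 in
/-- For positive operators `T`, `L` on a complex Hilbert space and `λ > 0`,
`‖(λI+T)⁻¹ (λI+L)‖ ≤ (λ^{-1/2} ‖(λI+L)^{-1/2} (L − T)‖ + 1)²`.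
The inverse is `Ring.inverse` (note `λI + T` is invertible since `T ⪰ 0` and `λ > 0`),
and the inverse square root is taken via the continuous functional calculus. -/
theorem opNorm_inv_resolvent_mul_le {H : Type*} [NormedAddCommGroup H]
    [InnerProductSpace ℂ H] [CompleteSpace H] (T L : H →L[ℂ] H)
    (hT : 0 ≤ T) (hL : 0 ≤ L) {lam : ℝ} (hlam : 0 < lam) :
    ‖Ring.inverse (lam • (1 : H →L[ℂ] H) + T) * (lam • (1 : H →L[ℂ] H) + L)‖
      ≤ (lam ^ (-(1/2) : ℝ)
          * ‖CFC.rpow (lam • (1 : H →L[ℂ] H) + L) (-(1/2) : ℝ) * (L - T)‖ + 1) ^ 2 := by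
  set lamNN : ℝ≥0 := ⟨lam, hlam.le⟩ with hlamNN
  have hlamNN0 : (0 : ℝ≥0) < lamNN := by exact_mod_cast hlam
  have hone : (0 : H →L[ℂ] H) ≤ lam • 1 := by
    have := star_mul_self_nonneg ((Real.sqrt lam) • (1 : H →L[ℂ] H))
    simpa [star_smul, smul_smul, Real.mul_self_sqrt hlam.le] using this
  have honeU : IsUnit (lam • (1 : H →L[ℂ] H)) := by
    have : IsUnit (algebraMap ℝ≥0 (H →L[ℂ] H) lamNN) :=
      (isUnit_iff_ne_zero.mpr hlamNN0.ne').map (algebraMap ℝ≥0 _)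
    rwa [Algebra.algebraMap_eq_smul_one, NNReal.smul_def] at this
  set A := lam • (1 : H →L[ℂ] H) + T with hA
  set B := lam • (1 : H →L[ℂ] H) + L with hB
  have hApos : (0:H →L[ℂ] H) ≤ A := add_nonneg hone hT
  have hBpos : (0:H →L[ℂ] H) ≤ B := add_nonneg hone hL
  have hAunit : IsUnit A := CStarAlgebra.isUnit_of_le _ (le_add_of_nonneg_right hT) (IsStrictlyPositive.iff_of_unital.mpr ⟨hone, honeU⟩)
  have hBunit : IsUnit B := CStarAlgebra.isUnit_of_le _ (le_add_of_nonneg_right hL) (IsStrictlyPositive.iff_of_unital.mpr ⟨hone, honeU⟩)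
  have hB0 : 0 ∉ spectrum ℝ≥0 B := (spectrum.zero_notMem_iff ℝ≥0).mpr hBunit
  have hAsa : IsSelfAdjoint A := .of_nonneg hApos
  have hspec : ∀ (S : H →L[ℂ] H), 0 ≤ S → (0:H →L[ℂ] H) ≤ lam • 1 + S →
      ∀ x ∈ spectrum ℝ≥0 (lam • (1:H →L[ℂ] H) + S), lamNN ≤ x := by
    intro S hS hpos x hx
    have hsa : IsSelfAdjoint (lam • (1:H →L[ℂ] H) + S) := .of_nonneg hpos
    have hR : ∀ y ∈ spectrum ℝ (lam • (1:H →L[ℂ] H) + S), lam ≤ y := by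
      refine (algebraMap_le_iff_le_spectrum (R := ℝ) hsa).mp ?_
      rw [Algebra.algebraMap_eq_smul_one]; exact le_add_of_nonneg_right hS
    exact_mod_cast hR x ((coe_mem_spectrum_real_of_nonneg hpos).mpr hx)
  have hAspec := hspec T hT hApos
  have hBspec := hspec L hL hBpos
  -- norm of the inverse of A
  have hInv : ‖Ring.inverse A‖ ≤ lam⁻¹ := by
    obtain ⟨u, hu⟩ := hAunit
    have h1 : Ring.inverse A = cfc (·⁻¹ : ℝ≥0 → ℝ≥0) A := by
      rw [← hu, Ring.inverse_unit, ← CFC.rpow_neg_one_eq_inv u (hu ▸ hApos),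
        CFC.rpow_neg_one_eq_cfc_inv, hu]
    have h2 : ‖Ring.inverse A‖₊ ≤ lamNN⁻¹ := by
      rw [h1]; exact nnnorm_cfc_nnreal_le fun x hx => inv_anti₀ hlamNN0 (hAspec x hx)
    exact_mod_cast h2
  -- norm of B ^ (-1/2)
  set Bnh := CFC.rpow B (-(1/2) : ℝ) with hBnh
  set Bh := CFC.rpow B ((1/2) : ℝ) with hBh
  have hBnhnorm : ‖Bnh‖ ≤ lam ^ (-(1/2) : ℝ) := by
    have hBnh' : Bnh = cfc (fun z : ℝ≥0 => z ^ (-(1/2) : ℝ)) B := hBnh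
    have h2 : ‖Bnh‖₊ ≤ lamNN ^ (-(1/2) : ℝ) := by
      rw [hBnh']
      exact nnnorm_cfc_nnreal_le fun x hx =>
        NNReal.rpow_le_rpow_of_nonpos hlamNN0 (hBspec x hx) (by norm_num)
    calc ‖Bnh‖ ≤ ((lamNN ^ (-(1/2) : ℝ) : ℝ≥0) : ℝ) := by exact_mod_cast h2
    _ = lam ^ (-(1/2) : ℝ) := by rw [NNReal.coe_rpow]; rfl
  -- algebraic identities
  have hBhBnh : Bh * Bnh = 1 := CFC.rpow_mul_rpow_neg (1/2 : ℝ) (IsStrictlyPositive.iff_of_unital.mpr ⟨hBpos, hBunit⟩)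
  have hBhBh : Bh * Bh = B := by
    have h1 : B ^ ((1/2 : ℝ) + (1/2 : ℝ)) = B ^ ((1/2 : ℝ)) * B ^ ((1/2 : ℝ)) :=
      CFC.rpow_add hBunit
    have h2 : ((1/2 : ℝ) + 1/2) = (1 : ℝ) := by norm_num
    rw [h2, CFC.rpow_one B hBpos] at h1
    rw [hBh]
    exact h1.symm
  have hBhsa : star Bh = Bh := by
    rw [hBh]
    exact (IsSelfAdjoint.of_nonneg CFC.rpow_nonneg).star_eq
  have hinvA : Ring.inverse A * A = 1 := Ring.inverse_mul_cancel _ hAunit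
  have hABLT : B = A + (L - T) := by rw [hA, hB]; abel
  have hdecomp : Ring.inverse A * B = 1 + Ring.inverse A * (L - T) := by
    rw [hABLT, mul_add, hinvA]
  -- key quantities
  set c := ‖Bnh * (L - T)‖ with hc
  set y := Ring.inverse A * Bh with hy
  set x := ‖Ring.inverse A * B‖ with hx
  have hx1 : x ≤ 1 + ‖y‖ * c := by
    have hfac : Ring.inverse A * (L - T) = y * (Bnh * (L - T)) := by
      rw [hy, mul_assoc, ← mul_assoc Bh, hBhBnh, one_mul]
    calc x = ‖1 + Ring.inverse A * (L - T)‖ := by rw [hx, hdecomp]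
    _ ≤ ‖(1 : H →L[ℂ] H)‖ + ‖Ring.inverse A * (L - T)‖ := norm_add_le _ _
    _ ≤ 1 + ‖y‖ * c := by
        gcongr
        · exact ContinuousLinearMap.norm_id_le
        · rw [hfac]; exact norm_mul_le _ _
  have hy2 : ‖y‖ ^ 2 ≤ x * lam⁻¹ := by
    have hstar : star y = Bh * Ring.inverse A := by
      rw [hy, star_mul, hBhsa, ← Ring.inverse_star, hAsa.star_eq]
    have hyy : y * star y = (Ring.inverse A * B) * Ring.inverse A := by
      rw [hstar, hy, mul_assoc, ← mul_assoc Bh, hBhBh, ← mul_assoc]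
    calc ‖y‖ ^ 2 = ‖y * star y‖ := by rw [sq, ← CStarRing.norm_self_mul_star]
    _ = ‖(Ring.inverse A * B) * Ring.inverse A‖ := by rw [hyy]
    _ ≤ ‖Ring.inverse A * B‖ * ‖Ring.inverse A‖ := norm_mul_le _ _
    _ ≤ x * lam⁻¹ := by rw [← hx]; exact mul_le_mul_of_nonneg_left hInv (norm_nonneg _)
  -- final numeric inequality
  have hrt : lam ^ (-(1/2) : ℝ) = (Real.sqrt lam)⁻¹ := by
    rw [Real.rpow_neg hlam.le, Real.sqrt_eq_rpow]
  have hr0 : 0 < Real.sqrt lam := Real.sqrt_pos.mpr hlam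
  have hrr : Real.sqrt lam * Real.sqrt lam = lam := Real.mul_self_sqrt hlam.le
  have hc0 : 0 ≤ c := norm_nonneg _
  have hn0 : 0 ≤ ‖y‖ := norm_nonneg _
  have hx0 : 0 ≤ x := norm_nonneg _
  rw [hrt]
  set r := Real.sqrt lam
  set n := ‖y‖
  set s := n * r with hs
  set d := c * r⁻¹ with hd
  have hs0 : 0 ≤ s := mul_nonneg hn0 hr0.le
  have hd0 : 0 ≤ d := mul_nonneg hc0 (by positivity)
  have hs2 : s ^ 2 ≤ x := by
    have : n ^ 2 * lam ≤ x := by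
      have := hy2
      rw [← le_div_iff₀ hlam]
      calc n ^ 2 ≤ x * lam⁻¹ := hy2
      _ = x / lam := by rw [div_eq_mul_inv]
    calc s ^ 2 = n ^ 2 * (r * r) := by rw [hs]; ring
    _ = n ^ 2 * lam := by rw [hrr]
    _ ≤ x := this
  have hxd : x ≤ 1 + s * d := by
    have hnc : n * c = s * d := by
      rw [hs, hd]
      field_simp
    rw [← hnc]
    exact hx1
  have hgoal : r⁻¹ * c = d := by rw [hd, mul_comm]
  rw [hgoal]
  have hsle : s ≤ d + 1 := by nlinarith [hs2, hxd, hs0, hd0]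
  nlinarith [hsle, hxd, hs0, hd0, mul_le_mul_of_nonneg_left hsle hd0]
end

section
/- Let g_λ : (0,U] → ℝ be a filter function satisfying sup_{0<u≤U} |1 − g_λ(u)u| u^ν ≤ γ_ν λ^ν for all 0 < ν ≤ ν_g and sup_{0<u≤U}|g_λ(u)u| ≤ b, sup_{0<u≤U}|g_λ(u)| ≤ b/λ. Then for any positive self-adjoint operator T with ‖T‖ ≤ U and any 0 < t ≤ ν_g, ‖(g_λ(T)T − I)(λI + T)^t‖ ≤ 2^t (b + 1 + γ_t) λ^t. -/
/-!
On the spectrum of `T` the operator is the function `u ↦ (g u * u - 1) (λ + u)^t`, so its norm is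
bounded by the supremum of that function over `[0, U]`. Since `(λ + u)^t ≤ 2^t max(λ, u)^t`, for
`u ≤ λ` the bound `|g u * u| ≤ b` gives `2^t (b + 1) λ^t`, and for `u > λ` the qualification
bound `|1 - g u * u| u^t ≤ γ_t λ^t` gives `2^t γ_t λ^t`.
-/

lemma add_rpow_le_two_rpow_mul_max_rpow {a x t : ℝ} (ha : 0 ≤ a) (hx : 0 ≤ x) (ht : 0 ≤ t) :
    (a + x) ^ t ≤ 2 ^ t * max a x ^ t := by
  rw [← Real.mul_rpow zero_le_two (le_max_of_le_left ha)]
  exact Real.rpow_le_rpow (add_nonneg ha hx) (by linarith [le_max_left a x, le_max_right a x]) ht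

lemma abs_sub_one_mul_add_rpow_le {r x lam b γ t : ℝ} (hlam : 0 < lam) (hx : 0 ≤ x)
    (ht : 0 ≤ t) (hγ : 0 ≤ γ) (hr : |r| ≤ b)
    (hres : lam < x → |1 - r| * x ^ t ≤ γ * lam ^ t) :
    |r - 1| * (lam + x) ^ t ≤ 2 ^ t * (b + 1 + γ) * lam ^ t := by
  have h2t : (0 : ℝ) ≤ 2 ^ t := by positivity
  have hlamt : 0 ≤ lam ^ t := by positivity
  have hb : 0 ≤ b := (abs_nonneg r).trans hr
  calc |r - 1| * (lam + x) ^ t ≤ |r - 1| * (2 ^ t * max lam x ^ t) := by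
        gcongr
        exact add_rpow_le_two_rpow_mul_max_rpow hlam.le hx ht
    _ ≤ 2 ^ t * ((b + 1) * lam ^ t + γ * lam ^ t) := ?_
    _ = 2 ^ t * (b + 1 + γ) * lam ^ t := by ring
  rcases le_or_gt x lam with hxl | hxl
  · have hr1 : |r - 1| ≤ b + 1 := by simpa using (abs_sub r 1).trans (add_le_add_left hr _)
    rw [max_eq_left hxl]
    nlinarith [mul_le_mul_of_nonneg_right hr1 hlamt, mul_nonneg hγ hlamt]
  · rw [max_eq_right hxl.le, abs_sub_comm]
    nlinarith [mul_le_mul_of_nonneg_left (hres hxl) h2t,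
      mul_nonneg h2t (mul_nonneg (by linarith : 0 ≤ b + 1) hlamt)]

section CStarAlgebra

variable {A : Type*} [CStarAlgebra A]

lemma cfc_mul_self_sub_one (g : ℝ → ℝ) (a : A) (hg : ContinuousOn g (spectrum ℝ a))
    (ha : IsSelfAdjoint a) : cfc g a * a - 1 = cfc (fun u => g u * u - 1) a := by
  rw [cfc_sub (fun u => g u * u) (fun _ => 1) a (hg.mul continuousOn_id),
    cfc_mul g (fun u => u) a hg, cfc_id' ℝ a, cfc_const_one ℝ a]

variable [PartialOrder A] [StarOrderedRing A]

lemma spectrum_subset_Icc_norm_of_nonneg {a : A} (ha : 0 ≤ a) :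
    spectrum ℝ a ⊆ Set.Icc 0 ‖a‖ := fun x hx =>
  ⟨spectrum_nonneg_of_nonneg ha hx,
    (le_algebraMap_iff_spectrum_le (IsSelfAdjoint.of_nonneg ha)).mp
      (IsSelfAdjoint.of_nonneg ha).le_algebraMap_norm_self x hx⟩

lemma rpow_smul_one_add_eq_cfc {a : A} (ha : 0 ≤ a) {lam : ℝ} (hlam : 0 < lam) (t : ℝ) :
    CFC.rpow (lam • (1 : A) + a) t = cfc (fun u => (lam + u) ^ t) a := by
  have hshift : lam • (1 : A) + a = cfc (fun u => lam + u) a := by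
    rw [cfc_const_add lam (fun u => u) a, cfc_id' ℝ a, Algebra.algebraMap_eq_smul_one]
  rw [hshift, CFC.rpow_eq_pow,
    CFC.cfc_rpow fun x hx => by linarith [spectrum_nonneg_of_nonneg ha hx]]

end CStarAlgebra

theorem filter_function_operator_bound_general {H : Type*} [NormedAddCommGroup H]
    [InnerProductSpace ℂ H] [CompleteSpace H]
    (T : H →L[ℂ] H) (hT : 0 ≤ T) {U : ℝ} (hTU : ‖T‖ ≤ U)
    (g : ℝ → ℝ) (hgcont : ContinuousOn g (Set.Icc 0 U))
    {lam b νg : ℝ} (hlam : lam ∈ Set.Ioc 0 U) (hb : 0 < b)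
    (hg2 : ∀ u ∈ Set.Ioc (0:ℝ) U, |g u * u| ≤ b)
    (γ : ℝ → ℝ) (hγ : ∀ ν ∈ Set.Ioc (0:ℝ) νg, 0 < γ ν)
    (hg3 : ∀ ν ∈ Set.Ioc (0:ℝ) νg, ∀ u ∈ Set.Ioc (0:ℝ) U,
      |1 - g u * u| * u ^ ν ≤ γ ν * lam ^ ν)
    {t : ℝ} (ht : t ∈ Set.Ioc (0:ℝ) νg) :
    ‖(cfc g T * T - 1) * CFC.rpow (lam • (1 : H →L[ℂ] H) + T) t‖
      ≤ (2:ℝ) ^ t * (b + 1 + γ t) * lam ^ t := by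
  have hspec : spectrum ℝ T ⊆ Set.Icc 0 U :=
    (spectrum_subset_Icc_norm_of_nonneg hT).trans (Set.Icc_subset_Icc_right hTU)
  have hg : ContinuousOn g (spectrum ℝ T) := hgcont.mono hspec
  rw [cfc_mul_self_sub_one g T hg (.of_nonneg hT), rpow_smul_one_add_eq_cfc hT hlam.1,
    ← cfc_mul (fun u => g u * u - 1) (fun u => (lam + u) ^ t) T
      ((hg.mul continuousOn_id).sub continuousOn_const)
      ((continuousOn_const.add continuousOn_id).rpow_const fun _ _ => Or.inr ht.1.le)]
  refine norm_cfc_le (by have := hlam.1; have := hγ t ht; positivity) fun x hx => ?_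
  obtain ⟨hx0, hxU⟩ := hspec hx
  have hr : |g x * x| ≤ b := by
    rcases hx0.eq_or_lt with rfl | hxpos
    · simpa using hb.le
    · exact hg2 x ⟨hxpos, hxU⟩
  rw [Real.norm_eq_abs, abs_mul, abs_of_nonneg (Real.rpow_nonneg (by linarith [hlam.1]) t)]
  exact abs_sub_one_mul_add_rpow_le hlam.1 hx0 ht.1.le (hγ t ht).le hr
    fun hxl => hg3 t ht x ⟨hlam.1.trans hxl, hxU⟩

/-- For a filter function `g = g_λ` with qualification `ν_g` and constants `b`, `γ_ν`,
and a positive operator `T` with `‖T‖ ≤ U`, one has for every `0 < t ≤ ν_g`: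
`‖(g(T) T − I) (λI + T)^t‖ ≤ 2^t (b + 1 + γ_t) λ^t`. -/
theorem filter_function_operator_bound {H : Type*} [NormedAddCommGroup H]
    [InnerProductSpace ℂ H] [CompleteSpace H]
    (T : H →L[ℂ] H) (hT : 0 ≤ T) {U : ℝ} (hU : 0 < U) (hTU : ‖T‖ ≤ U)
    (g : ℝ → ℝ) (hgcont : ContinuousOn g (Set.Icc 0 U))
    {lam b νg : ℝ} (hlam : lam ∈ Set.Ioc 0 U) (hb : 0 < b) (hνg : (1:ℝ)/2 ≤ νg)
    (hg1 : ∀ u ∈ Set.Ioc (0:ℝ) U, |g u| ≤ b / lam)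
    (hg2 : ∀ u ∈ Set.Ioc (0:ℝ) U, |g u * u| ≤ b)
    (γ : ℝ → ℝ) (hγ : ∀ ν ∈ Set.Ioc (0:ℝ) νg, 0 < γ ν)
    (hg3 : ∀ ν ∈ Set.Ioc (0:ℝ) νg, ∀ u ∈ Set.Ioc (0:ℝ) U,
      |1 - g u * u| * u ^ ν ≤ γ ν * lam ^ ν)
    {t : ℝ} (ht : t ∈ Set.Ioc (0:ℝ) νg) :
    ‖(cfc g T * T - 1) * CFC.rpow (lam • (1 : H →L[ℂ] H) + T) t‖
      ≤ (2:ℝ) ^ t * (b + 1 + γ t) * lam ^ t :=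
  filter_function_operator_bound_general T hT hTU g hgcont hlam hb hg2 γ hγ hg3 ht
end
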